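/- arXiv:1812.09736 — 2 statements merged into one kernel-verified Lean document; each statement's English description precedes it below -/
import Mathlib

section
/- With the notation of the paper over A = K[x_{i,j}, y_{i,j}, z_{i,j,k}] (char K ≠ 2), let d_2 be the explicit 5×6 matrix and d_3 the 6×2 matrix with rows (b, 2a), (−2c, −b), (−v_1, −u_1), (v_2, u_2), (v_3, u_3), (−v_4, −u_4). Then the matrix product d_2 · d_3 is the zero 5×2 matrix. -/
noncomputable section
open MvPolynomial Matrix

/-- The polynomial ring in 16 variables. -/
abbrev PA (K : Type*) [Field K] := MvPolynomial (Fin 16) K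

variable {K : Type*} [Field K]

def x12 : PA K := X 0
def x13 : PA K := X 1
def x14 : PA K := X 2
def x23 : PA K := X 3
def x24 : PA K := X 4
def x34 : PA K := X 5
def y12 : PA K := X 6
def y13 : PA K := X 7
def y14 : PA K := X 8
def y23 : PA K := X 9
def y24 : PA K := X 10
def y34 : PA K := X 11
def z123 : PA K := X 12
def z124 : PA K := X 13
def z134 : PA K := X 14
def z234 : PA K := X 15

/-- `Dl xij yij xkl ykl` is the 2x2 minor Delta(ij,kl) = x_ij*y_kl - x_kl*y_ij. -/
def Dl (p q r s : PA K) : PA K := p * s - r * q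

def del1 : PA K := Dl x12 y12 x34 y34
def del2 : PA K := Dl x13 y13 x24 y24
def del3 : PA K := Dl x14 y14 x23 y23

/-- The cubic u_{1,2,3}. -/
def u123 : PA K :=
  -2*z234 * Dl x12 y12 x13 y13 + 2*z134 * Dl x12 y12 x23 y23
    - 2*z124 * Dl x13 y13 x23 y23 + z123 * (del2 - del1 + del3)

/-- The cubic u_{1,2,4}. -/
def u124 : PA K :=
  2*z234 * Dl x12 y12 x14 y14 - 2*z134 * Dl x12 y12 x24 y24
    + z124 * (del1 + del2 + del3) - 2*z123 * Dl x14 y14 x24 y24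

/-- The cubic u_{1,3,4}. -/
def u134 : PA K :=
  2*z234 * Dl x13 y13 x14 y14 + z134 * (-del1 - del2 + del3)
    + 2*z124 * Dl x13 y13 x34 y34 - 2*z123 * Dl x14 y14 x34 y34

/-- The cubic u_{2,3,4}. -/
def u234 : PA K :=
  z234 * (-del1 - del2 - del3) - 2*z134 * Dl x23 y23 x24 y24
    + 2*z124 * Dl x23 y23 x34 y34 - 2*z123 * Dl x24 y24 x34 y34

def pa : PA K := x12*x34 - x13*x24 + x14*x23
def pb : PA K := x12*y34 - x13*y24 + x14*y23 + x34*y12 - x24*y13 + x23*y14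
def pc : PA K := y12*y34 - y13*y24 + y14*y23

/-- The quartic u = b^2 - 4ac. -/
def uQ : PA K := pb^2 - 4*pa*pc

/-- u_1 = sum over i # 1 of (-1)^i x_{i,1} z_hat-i (skew convention x_{i,j} = -x_{j,i}). -/
def u1 : PA K := -x12*z134 + x13*z124 - x14*z123
def u2 : PA K := -x12*z234 + x23*z124 - x24*z123
def u3 : PA K := -x13*z234 + x23*z134 - x34*z123
def u4 : PA K := -x14*z234 + x24*z134 - x34*z124
def v1 : PA K := -y12*z134 + y13*z124 - y14*z123
def v2 : PA K := -y12*z234 + y23*z124 - y24*z123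
def v3 : PA K := -y13*z234 + y23*z134 - y34*z123
def v4 : PA K := -y14*z234 + y24*z134 - y34*z124
/-- The 5x6 matrix d2. -/
def d2 : Matrix (Fin 5) (Fin 6) (PA K) := Matrix.of ![
    ![v1, u1, -del1 + del2 - del3, 2 * Dl x13 y13 x14 y14, -2 * Dl x12 y12 x14 y14, -2 * Dl x12 y12 x13 y13],
    ![-v2, -u2, -2 * Dl x23 y23 x24 y24, -del1 - del2 + del3, 2 * Dl x12 y12 x24 y24, 2 * Dl x12 y12 x23 y23],
    ![v3, u3, 2 * Dl x23 y23 x34 y34, 2 * Dl x13 y13 x34 y34, -del1 - del2 - del3, -2 * Dl x13 y13 x23 y23],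
    ![v4, u4, 2 * Dl x24 y24 x34 y34, 2 * Dl x14 y14 x34 y34, -2 * Dl x14 y14 x24 y24, del1 - del2 - del3],
    ![0, 0, -z234, -z134, z124, z123]]

/-- The 6x2 matrix d3. -/
def d3 : Matrix (Fin 6) (Fin 2) (PA K) := Matrix.of ![
    ![pb, 2*pa], ![-2*pc, -pb], ![-v1, -u1], ![v2, u2], ![v3, u3], ![-v4, -u4]]

/-! Let `X`, `Y` be the alternating `4 × 4` matrices of the `x_{i,j}` and `y_{i,j}`, and `X̃`, `Ỹ`
their duals (entry `ij` is `±` the entry at the complementary pair), so that `X X̃ = a`, `Y Ỹ = c`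
and, polarizing, `Ỹ X + X̃ Y = b`. With `s_i = (-1)^i z_{\hat i}` we have `u = s X`, `v = s Y`, and
up to signs of its rows and columns the `4 × 4` block of `d_2` is `Qᵀ` for `Q = Ỹ X - X̃ Y`. So the
first four rows of `d_2 d_3` are `± (b v - 2c u + v Q)` and `± (2a v - b u + u Q)`, which vanish
because `Y Q = 2c X - b Y` and `X Q = b X - 2a Y`. The last row is `-(s · s Y, s · s X)`, which
vanishes because `X` and `Y` are alternating. -/

section Polarization

variable {R A : Type*} [CommRing R] [Ring A] [Algebra R A]

theorem mul_sub_mul_eq_of_polarization {X Y X' Y' : A} {b c : R}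
    (hY : Y * Y' = c • 1) (hpol : Y' * X + X' * Y = b • 1) :
    Y * (Y' * X - X' * Y) = (2 * c) • X - b • Y := by
  rw [eq_sub_of_add_eq' hpol, mul_sub, mul_sub, mul_smul_comm, mul_one, ← mul_assoc, hY,
    smul_mul_assoc, one_mul]
  module

end Polarization

section Alternating

variable {R : Type*} [CommRing R] (a b c d e f : R)

def alt4 : Matrix (Fin 4) (Fin 4) R :=
  !![0, a, b, c; -a, 0, d, e; -b, -d, 0, f; -c, -e, -f, 0]

def alt4Dual : Matrix (Fin 4) (Fin 4) R := alt4 (-f) e (-d) (-c) b (-a)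

theorem alt4_mul_alt4Dual :
    alt4 a b c d e f * alt4Dual a b c d e f = (a * f - b * e + c * d) • 1 := by
  ext i j
  fin_cases i <;> fin_cases j <;> simp [alt4Dual, alt4] <;> ring

theorem alt4Dual_mul_alt4_add_alt4Dual_mul_alt4 (a' b' c' d' e' f' : R) :
    alt4Dual a' b' c' d' e' f' * alt4 a b c d e f + alt4Dual a b c d e f * alt4 a' b' c' d' e' f' =
      (a * f' - b * e' + c * d' + f * a' - e * b' + d * c') • 1 := by
  ext i j
  fin_cases i <;> fin_cases j <;> simp [alt4Dual, alt4] <;> ring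

theorem dotProduct_vecMul_alt4_self (s : Fin 4 → R) : s ⬝ᵥ (s ᵥ* alt4 a b c d e f) = 0 := by
  simp [alt4, dotProduct, vecMul, Fin.sum_univ_four]
  ring

end Alternating

section Pencil

variable (K)

def altX : Matrix (Fin 4) (Fin 4) (PA K) := alt4 x12 x13 x14 x23 x24 x34

def altY : Matrix (Fin 4) (Fin 4) (PA K) := alt4 y12 y13 y14 y23 y24 y34

def crossTerm : Matrix (Fin 4) (Fin 4) (PA K) :=
  alt4Dual y12 y13 y14 y23 y24 y34 * altX K - alt4Dual x12 x13 x14 x23 x24 x34 * altY K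

def zSigned : Fin 4 → PA K := ![-z234, z134, -z124, z123]

def uVec : Fin 4 → PA K := ![u1, u2, u3, u4]

def vVec : Fin 4 → PA K := ![v1, v2, v3, v4]

end Pencil

theorem zSigned_vecMul_altX : zSigned K ᵥ* altX K = uVec K := by
  funext j
  fin_cases j <;>
    simp [zSigned, altX, alt4, uVec, vecMul, dotProduct, Fin.sum_univ_four, u1, u2, u3, u4] <;> ring

theorem zSigned_vecMul_altY : zSigned K ᵥ* altY K = vVec K := by
  funext j
  fin_cases j <;>
    simp [zSigned, altY, alt4, vVec, vecMul, dotProduct, Fin.sum_univ_four, v1, v2, v3, v4] <;> ring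

theorem altY_mul_crossTerm :
    altY K * crossTerm K = (2 * pc : PA K) • altX K - (pb : PA K) • altY K :=
  mul_sub_mul_eq_of_polarization (alt4_mul_alt4Dual ..)
    (alt4Dual_mul_alt4_add_alt4Dual_mul_alt4 x12 x13 x14 x23 x24 x34 ..)

theorem altX_mul_crossTerm :
    altX K * crossTerm K = (pb : PA K) • altX K - (2 * pa : PA K) • altY K := by
  have h : altX K * (alt4Dual x12 x13 x14 x23 x24 x34 * altY K -
      alt4Dual y12 y13 y14 y23 y24 y34 * altX K) =
        (2 * pa : PA K) • altY K - (pb : PA K) • altX K :=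
    mul_sub_mul_eq_of_polarization (alt4_mul_alt4Dual ..) ((add_comm _ _).trans
      (alt4Dual_mul_alt4_add_alt4Dual_mul_alt4 x12 x13 x14 x23 x24 x34 y12 y13 y14 y23 y24 y34))
  rw [crossTerm, ← neg_sub, mul_neg, h, neg_sub]

theorem pb_smul_vVec_sub_add_vecMul_crossTerm_eq_zero :
    (pb : PA K) • vVec K - (2 * pc : PA K) • uVec K + vVec K ᵥ* crossTerm K = 0 := by
  rw [← zSigned_vecMul_altY, ← zSigned_vecMul_altX, vecMul_vecMul, altY_mul_crossTerm, vecMul_sub,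
    vecMul_smul, vecMul_smul]
  abel

theorem two_pa_smul_vVec_sub_add_vecMul_crossTerm_eq_zero :
    (2 * pa : PA K) • vVec K - (pb : PA K) • uVec K + uVec K ᵥ* crossTerm K = 0 := by
  rw [← zSigned_vecMul_altY, ← zSigned_vecMul_altX, vecMul_vecMul, altX_mul_crossTerm, vecMul_sub,
    vecMul_smul, vecMul_smul]
  abel

theorem d2_mul_d3_castSucc_zero (i : Fin 4) :
    (d2 (K := K) * d3 (K := K)) i.castSucc 0 =
      ![1, -1, 1, 1] i *
        ((pb : PA K) • vVec K - (2 * pc : PA K) • uVec K + vVec K ᵥ* crossTerm K) i := by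
  simp only [Matrix.mul_apply, Fin.sum_univ_six]
  fin_cases i <;>
    simp [d2, d3, vVec, uVec, crossTerm, altX, altY, alt4Dual, alt4, pb, pc, del1, del2, del3,
      Dl] <;> ring

theorem d2_mul_d3_castSucc_one (i : Fin 4) :
    (d2 (K := K) * d3 (K := K)) i.castSucc 1 =
      ![1, -1, 1, 1] i *
        ((2 * pa : PA K) • vVec K - (pb : PA K) • uVec K + uVec K ᵥ* crossTerm K) i := by
  simp only [Matrix.mul_apply, Fin.sum_univ_six]
  fin_cases i <;>
    simp [d2, d3, vVec, uVec, crossTerm, altX, altY, alt4Dual, alt4, pa, pb, del1, del2, del3,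
      Dl] <;> ring

theorem d2_mul_d3_last (j : Fin 2) :
    (d2 (K := K) * d3 (K := K)) (Fin.last 4) j = -(zSigned K ⬝ᵥ ![vVec K, uVec K] j) := by
  simp only [Matrix.mul_apply, Fin.sum_univ_six]
  fin_cases j <;> simp [vVec, uVec, d2, d3, zSigned, dotProduct, Fin.sum_univ_four] <;> ring

theorem d2_mul_d3_general :
    d2 * d3 = (0 : Matrix (Fin 5) (Fin 2) (PA K)) := by
  -- the `*` above elaborates to the `CStarMatrix` product, which is defeq to the matrix product
  show d2 (K := K) * d3 (K := K) = 0
  refine Matrix.ext fun i j => ?_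
  induction i using Fin.lastCases with
  | last =>
    rw [d2_mul_d3_last, ← zSigned_vecMul_altY, ← zSigned_vecMul_altX]
    fin_cases j <;> simp [altX, altY, dotProduct_vecMul_alt4_self]
  | cast i =>
    match j with
    | 0 => rw [d2_mul_d3_castSucc_zero, pb_smul_vVec_sub_add_vecMul_crossTerm_eq_zero]; simp
    | 1 => rw [d2_mul_d3_castSucc_one, two_pa_smul_vVec_sub_add_vecMul_crossTerm_eq_zero]; simp

/-- d2 * d3 = 0. -/
theorem d2_mul_d3 (hchar : ringChar K ≠ 2) :
    d2 * d3 = (0 : Matrix (Fin 5) (Fin 2) (PA K)) :=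
  d2_mul_d3_general
end
end

section
/- Let P_1 ⊆ A be the ideal generated by z_{1,3,4}, y_{1,4}z_{1,2,3} − y_{1,3}z_{1,2,4}, x_{1,4}z_{1,2,3} − x_{1,3}z_{1,2,4}, and Δ(14,13) = x_{1,4}y_{1,3} − x_{1,3}y_{1,4}. Then A/P_1 has a free resolution of length 3 whose middle differential d_2^{P_1} is the explicit 4×5 matrix given in the paper; in particular, the composite d_1^{P_1} · d_2^{P_1} = 0, where d_1^{P_1} = [z_{1,3,4}, y_{1,4}z_{1,2,3} − y_{1,3}z_{1,2,4}, x_{1,4}z_{1,2,3} − x_{1,3}z_{1,2,4}, Δ(14,13)]. -/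
noncomputable section
open MvPolynomial Matrix

variable {K : Type*} [Field K]

/-- The ideal P1. -/
def P1 : Ideal (PA K) := Ideal.span
  {z134, y14*z123 - y13*z124, x14*z123 - x13*z124, Dl x14 y14 x13 y13}

/-- The 1x4 matrix d1^{P1}. -/
def d1P : Matrix (Fin 1) (Fin 4) (PA K) := Matrix.of
  ![![z134, y14*z123 - y13*z124, x14*z123 - x13*z124, Dl x14 y14 x13 y13]]

/-- The 4x5 matrix d2^{P1}. -/
def d2P : Matrix (Fin 4) (Fin 5) (PA K) := Matrix.of ![
    ![0, 0, y14*z123 - y13*z124, x14*z123 - x13*z124, Dl x14 y14 x13 y13],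
    ![x14, x13, -z134, 0, 0],
    ![-y14, -y13, 0, -z134, 0],
    ![z124, z123, 0, 0, -z134]]

/-!
Together with `d3 = [z134·I₂; M]`, the matrices `d1P`, `d2P` form the mapping cone of
multiplication by `z134` on the Hilbert–Burch resolution `0 → A² → A³ → A` of the ideal of
`2 × 2` minors of `M = [[x14, x13], [-y14, -y13], [z124, z123]]`. That complex is exact because
the minor `Δ(14,13) = x14 y13 - x13 y14` is prime (it is linear in `x14` with coprime
coefficients) and does not divide the minor `x14 z123 - x13 z124`, which forces every syzygy of
the minors to be a combination of the columns of `M`. The cone is exact because `z134` is a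
nonzerodivisor modulo the minors, none of which involves `z134`.
-/

theorem Ideal.mem_of_mul_mem_span_range_of_dvd_sub {R ι : Type*} [CommRing R] [IsDomain R]
    [Fintype ι] {g : ι → R} {t r : R} (ht : t ≠ 0) (φ : R →+* R) (hφt : φ t = 0)
    (hφg : ∀ i, φ (g i) = g i) (hdvd : ∀ s, t ∣ s - φ s)
    (hr : t * r ∈ Ideal.span (Set.range g)) : r ∈ Ideal.span (Set.range g) := by
  obtain ⟨c, hc⟩ := Ideal.mem_span_range_iff_exists_fun.mp hr
  choose d hd using fun i ↦ hdvd (c i)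
  have hφc : ∑ i, φ (c i) * g i = 0 := by
    simpa [hφt, hφg] using congrArg φ hc
  refine Ideal.mem_span_range_iff_exists_fun.mpr ⟨d, mul_left_cancel₀ ht ?_⟩
  calc t * ∑ i, d i * g i = ∑ i, (c i - φ (c i)) * g i := by
        simp only [Finset.mul_sum, hd, mul_assoc]
    _ = t * r := by simp only [sub_mul, Finset.sum_sub_distrib, hc, hφc, sub_zero]

theorem Matrix.exact_mulVecLin_of_mul_eq_zero {R l m n : Type*} [CommRing R] [Fintype m]
    [Fintype n] {A : Matrix m n R} {B : Matrix l m R} (hBA : B * A = 0)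
    (hker : ∀ v, B *ᵥ v = 0 → ∃ w, A *ᵥ w = v) :
    Function.Exact A.mulVecLin B.mulVecLin := by
  refine fun v ↦ ⟨hker v, ?_⟩
  rintro ⟨w, rfl⟩
  simp [mulVec_mulVec, hBA]

theorem Matrix.range_proj_zero_comp_mulVecLin_of_row {R n : Type*} [CommRing R] [Fintype n]
    (r : n → R) :
    LinearMap.range ((LinearMap.proj 0 : (Fin 1 → R) →ₗ[R] R).comp (of ![r]).mulVecLin) =
      Ideal.span (Set.range r) := by
  ext x
  simp [Ideal.mem_span_range_iff_exists_fun, mulVec, dotProduct, mul_comm]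

section HilbertBurchCone

variable {R : Type*} [CommRing R] (a b c d e f t : R)

/-- The ideal of `2 × 2` minors of the matrix with rows `(a, b), (-c, -d), (e, f)`. -/
def minorsIdeal : Ideal R :=
  Ideal.span (Set.range ![c * f - d * e, a * f - b * e, a * d - b * c])

/-- The differentials of the mapping cone of multiplication by `t` on the Hilbert–Burch
resolution `0 → R² → R³ → R` of `minorsIdeal a b c d e f`. -/
def coneD₁ : Matrix (Fin 1) (Fin 4) R :=
  of ![![t, c * f - d * e, a * f - b * e, a * d - b * c]]

def coneD₂ : Matrix (Fin 4) (Fin 5) R :=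
  of ![![0, 0, c * f - d * e, a * f - b * e, a * d - b * c],
    ![a, b, -t, 0, 0],
    ![-c, -d, 0, -t, 0],
    ![e, f, 0, 0, -t]]

def coneD₃ : Matrix (Fin 5) (Fin 2) R :=
  of ![![t, 0], ![0, t], ![a, b], ![-c, -d], ![e, f]]

theorem coneD₁_mulVec (v : Fin 4 → R) : coneD₁ a b c d e f t *ᵥ v =
    ![t * v 0 + (c * f - d * e) * v 1 + (a * f - b * e) * v 2 + (a * d - b * c) * v 3] := by
  ext i; fin_cases i; simp [coneD₁, mulVec, dotProduct, Fin.sum_univ_four]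

theorem coneD₂_mulVec (v : Fin 5 → R) : coneD₂ a b c d e f t *ᵥ v =
    ![(c * f - d * e) * v 2 + (a * f - b * e) * v 3 + (a * d - b * c) * v 4,
      a * v 0 + b * v 1 - t * v 2,
      -(c * v 0) - d * v 1 - t * v 3,
      e * v 0 + f * v 1 - t * v 4] := by
  ext i; fin_cases i <;> simp [coneD₂, mulVec, dotProduct, Fin.sum_univ_five] <;> ring

theorem coneD₃_mulVec (v : Fin 2 → R) : coneD₃ a b c d e f t *ᵥ v =
    ![t * v 0, t * v 1, a * v 0 + b * v 1, -(c * v 0) - d * v 1, e * v 0 + f * v 1] := by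
  ext i; fin_cases i <;> simp [coneD₃, mulVec, dotProduct, sub_eq_add_neg]

theorem coneD₁_mul_coneD₂ : coneD₁ a b c d e f t * coneD₂ a b c d e f t = 0 := by
  ext i j
  fin_cases i; fin_cases j <;> simp [coneD₁, coneD₂, mul_apply, Fin.sum_univ_four] <;> ring

theorem coneD₂_mul_coneD₃ : coneD₂ a b c d e f t * coneD₃ a b c d e f t = 0 := by
  ext i j
  fin_cases i <;> fin_cases j <;> simp [coneD₂, coneD₃, mul_apply, Fin.sum_univ_five] <;> ring

variable [IsDomain R] {a b c d e f t}

theorem exists_eq_of_minors_syzygy (hp : Prime (a * d - b * c))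
    (hn : ¬ a * d - b * c ∣ a * f - b * e) {u v w : R}
    (h : (c * f - d * e) * u + (a * f - b * e) * v + (a * d - b * c) * w = 0) :
    ∃ p q, u = a * p + b * q ∧ v = -(c * p) - d * q ∧ w = e * p + f * q := by
  have hdvd {x y : R} (hxy : x * (a * f - b * e) = y * (a * d - b * c)) : a * d - b * c ∣ x :=
    (hp.dvd_or_dvd ⟨y, by rw [hxy, mul_comm]⟩).resolve_right hn
  obtain ⟨p, hp'⟩ := hdvd (x := u * d + v * b) (y := u * f - w * b)
    (by linear_combination b * h)
  obtain ⟨q, hq'⟩ := hdvd (x := -(u * c + v * a)) (y := w * a - u * e)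
    (by linear_combination -a * h)
  refine ⟨p, q, mul_left_cancel₀ hp.ne_zero ?_, mul_left_cancel₀ hp.ne_zero ?_,
    mul_left_cancel₀ hp.ne_zero ?_⟩
  · linear_combination a * hp' + b * hq'
  · linear_combination -c * hp' - d * hq'
  · linear_combination e * hp' + f * hq' + h

theorem injective_mulVecLin_coneD₃ (ht : t ≠ 0) :
    Function.Injective (coneD₃ a b c d e f t).mulVecLin := by
  refine (injective_iff_map_eq_zero _).mpr fun v hv ↦ ?_
  simp only [mulVecLin_apply, coneD₃_mulVec, cons_eq_zero_iff, mul_eq_zero, ht, false_or] at hv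
  ext i; fin_cases i
  exacts [hv.1, hv.2.1]

theorem exact_mulVecLin_coneD₃_coneD₂ (hp : Prime (a * d - b * c))
    (hn : ¬ a * d - b * c ∣ a * f - b * e) :
    Function.Exact (coneD₃ a b c d e f t).mulVecLin (coneD₂ a b c d e f t).mulVecLin := by
  refine exact_mulVecLin_of_mul_eq_zero (coneD₂_mul_coneD₃ ..) fun v hv ↦ ?_
  simp only [coneD₂_mulVec, cons_eq_zero_iff] at hv
  obtain ⟨h₀, h₁, h₂, h₃, -⟩ := hv
  obtain ⟨p, q, hv₂, hv₃, hv₄⟩ := exists_eq_of_minors_syzygy hp hn h₀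
  -- Cramer's rule for the top `2 × 2` block, whose determinant is the prime minor.
  have hv₀ : v 0 = t * p := by
    refine sub_eq_zero.mp (mul_left_cancel₀ hp.ne_zero ?_)
    linear_combination d * h₁ + b * h₂ + t * (d * hv₂ + b * hv₃)
  have hv₁ : v 1 = t * q := by
    refine sub_eq_zero.mp (mul_left_cancel₀ hp.ne_zero ?_)
    linear_combination -c * h₁ - a * h₂ - t * (c * hv₂ + a * hv₃)
  refine ⟨![p, q], ?_⟩
  rw [coneD₃_mulVec]
  ext i; fin_cases i <;> simp [hv₀, hv₁, hv₂, hv₃, hv₄]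

theorem exact_mulVecLin_coneD₂_coneD₁ (hp : Prime (a * d - b * c))
    (hn : ¬ a * d - b * c ∣ a * f - b * e)
    (hreg : ∀ r, t * r ∈ minorsIdeal a b c d e f → r ∈ minorsIdeal a b c d e f) :
    Function.Exact (coneD₂ a b c d e f t).mulVecLin (coneD₁ a b c d e f t).mulVecLin := by
  refine exact_mulVecLin_of_mul_eq_zero (coneD₁_mul_coneD₂ ..) fun v hv ↦ ?_
  simp only [coneD₁_mulVec, cons_eq_zero_iff] at hv
  obtain ⟨h, -⟩ := hv
  have hv₀ : t * v 0 ∈ minorsIdeal a b c d e f :=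
    Ideal.mem_span_range_iff_exists_fun.mpr
      ⟨![-v 1, -v 2, -v 3], by
        simp only [Fin.sum_univ_three, cons_val_zero, cons_val_one, cons_val]
        linear_combination -h⟩
  obtain ⟨s, hs⟩ := Ideal.mem_span_range_iff_exists_fun.mp (hreg _ hv₀)
  simp only [Fin.sum_univ_three, cons_val_zero, cons_val_one, cons_val] at hs
  obtain ⟨p, q, hv₁, hv₂, hv₃⟩ := exists_eq_of_minors_syzygy hp hn
    (u := v 1 + t * s 0) (v := v 2 + t * s 1) (w := v 3 + t * s 2)
    (by linear_combination h + t * hs)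
  refine ⟨![p, q, s 0, s 1, s 2], ?_⟩
  rw [coneD₂_mulVec]
  ext i
  fin_cases i <;>
    simp only [Fin.zero_eta, Fin.mk_one, Fin.reduceFinMk, cons_val_zero, cons_val_one, cons_val]
  · linear_combination hs
  · linear_combination -hv₁
  · linear_combination -hv₂
  · linear_combination -hv₃

end HilbertBurchCone

theorem MvPolynomial.prime_X_mul_X_sub_X_mul_X {σ R : Type*} [CommRing R] [IsDomain R]
    [UniqueFactorizationMonoid R] {i j k l : σ} (hij : i ≠ j) (hik : i ≠ k) (hil : i ≠ l)
    (hjk : j ≠ k) (hjl : j ≠ l) :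
    Prime (X i * X j - X k * X l : MvPolynomial σ R) := by
  classical
  rw [← UniqueFactorizationMonoid.irreducible_iff_prime,
    show (X i * X j - X k * X l : MvPolynomial σ R) = X j * X i + -(X k * X l) by ring]
  have hrel : IsRelPrime (X j : MvPolynomial σ R) (-(X k * X l)) := by
    rw [X_prime.irreducible.isRelPrime_iff_not_dvd, dvd_neg, X_prime.dvd_mul, X_dvd_X, X_dvd_X]
    tauto
  refine irreducible_mul_X_add _ _ i (X_ne_zero j) (by simp [vars_X, hij]) ?_ hrel
  rw [vars_neg]
  intro hi
  rcases Finset.mem_union.mp (vars_mul _ _ hi) with h | h <;> simp_all [vars_X]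

theorem MvPolynomial.X_dvd_sub_aeval_update_zero {σ R : Type*} [CommRing R] [DecidableEq σ]
    (i : σ) (f : MvPolynomial σ R) : X i ∣ f - aeval (Function.update X i 0) f := by
  let π := Ideal.Quotient.mk (Ideal.span {(X i : MvPolynomial σ R)})
  suffices π = π.comp (aeval (Function.update X i 0)).toRingHom by
    rw [← Ideal.mem_span_singleton, ← Ideal.Quotient.eq]
    exact congrArg (· f) this
  refine ringHom_ext (by simp) fun j ↦ ?_
  rcases eq_or_ne j i with rfl | hj
  · simp [π]
  · simp [hj]

theorem prime_x14_mul_y13_sub_x13_mul_y14 : Prime (x14 * y13 - x13 * y14 : PA K) :=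
  MvPolynomial.prime_X_mul_X_sub_X_mul_X (by decide) (by decide) (by decide) (by decide)
    (by decide)

theorem not_dvd_x14_mul_z123_sub_x13_mul_z124 :
    ¬ (x14 * y13 - x13 * y14 : PA K) ∣ x14 * z123 - x13 * z124 := by
  rintro ⟨g, hg⟩
  simpa [x13, x14, y13, y14, z123, z124] using
    congrArg (eval fun i : Fin 16 ↦ if i = 2 ∨ i = 12 then (1 : K) else 0) hg

theorem mem_minorsIdeal_of_z134_mul_mem {r : PA K}
    (hr : z134 * r ∈ minorsIdeal x14 x13 y14 y13 z124 z123) :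
    r ∈ minorsIdeal x14 x13 y14 y13 z124 z123 := by
  refine Ideal.mem_of_mul_mem_span_range_of_dvd_sub (X_ne_zero _)
    (aeval (Function.update X 14 0)).toRingHom (by simp) (fun i ↦ ?_)
    (X_dvd_sub_aeval_update_zero 14) hr
  fin_cases i <;> simp [x13, x14, y13, y14, z123, z124]

/-- A/P1 has a free resolution of length 3 with middle differential d2^{P1};
in particular d1^{P1} * d2^{P1} = 0. -/
theorem P1_resolution :
    (∃ d3P : Matrix (Fin 5) (Fin 2) (PA K),
      Function.Injective d3P.mulVecLin ∧
      Function.Exact d3P.mulVecLin (d2P : Matrix (Fin 4) (Fin 5) (PA K)).mulVecLin ∧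
      Function.Exact (d2P : Matrix (Fin 4) (Fin 5) (PA K)).mulVecLin (d1P : Matrix (Fin 1) (Fin 4) (PA K)).mulVecLin ∧
      LinearMap.range ((LinearMap.proj 0 : (Fin 1 → PA K) →ₗ[PA K] PA K).comp
        (d1P : Matrix (Fin 1) (Fin 4) (PA K)).mulVecLin) = (P1 : Ideal (PA K))) ∧
    d1P * d2P = (0 : Matrix (Fin 1) (Fin 5) (PA K)) := by
  have hrange : LinearMap.range ((LinearMap.proj 0).comp (d1P : Matrix _ _ (PA K)).mulVecLin) =
      P1 := (range_proj_zero_comp_mulVecLin_of_row _).trans <| by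
    simp only [P1, range_cons, range_empty, Set.union_empty, Set.singleton_union]
  have hd₁ : (d1P : Matrix _ _ (PA K)) = coneD₁ x14 x13 y14 y13 z124 z123 z134 := rfl
  have hd₂ : (d2P : Matrix _ _ (PA K)) = coneD₂ x14 x13 y14 y13 z124 z123 z134 := rfl
  rw [hd₁, hd₂] at *
  have hΔ := prime_x14_mul_y13_sub_x13_mul_y14 (K := K)
  have hΔ' := not_dvd_x14_mul_z123_sub_x13_mul_z124 (K := K)
  exact ⟨⟨coneD₃ x14 x13 y14 y13 z124 z123 z134, injective_mulVecLin_coneD₃ (X_ne_zero _),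
    exact_mulVecLin_coneD₃_coneD₂ hΔ hΔ', exact_mulVecLin_coneD₂_coneD₁ hΔ hΔ'
      fun _ ↦ mem_minorsIdeal_of_z134_mul_mem,
    hrange⟩, coneD₁_mul_coneD₂ ..⟩
end
end
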